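/- The condition ω ∈ A_{1+p/n} is optimal among Muckenhoupt classes to obtain (1, ω) ∈ B¹_{q,p} for some q > p: specifically, for the power weight ω(x) = |x|^β on ℝⁿ (which is in A_r if and only if -n < β < (r-1)n), if β > p then there is no q > p for which (1, ω) ∈ B¹_{q,p}, since that would require p < β < p + (p/q - 1)n, which is impossible because (p/q - 1)n < 0. -/
import Mathlib


open MeasureTheory Metric

/-- Optimality of `A_{1+p/n}`: for the power weight `ω(x) = ‖x‖^β` on `ℝⁿ` with `β > p`,
there is no `q > p` for which the pair `(1, ω)` satisfies the balance condition
`B¹_{q,p}`. -/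
theorem power_weight_balance_optimal (n : ℕ) (hn : 1 ≤ n) (p β : ℝ) (hp : 0 < p)
    (hβ : p < β) :
    ¬ ∃ q : ℝ, p < q ∧ ∃ K : ℝ, 0 < K ∧
      ∀ (x : EuclideanSpace ℝ (Fin n)) (r ρ : ℝ), 0 < r → r < ρ →
        ((volume (ball x r)).toReal / (volume (ball x ρ)).toReal) ^ ((1 : ℝ) / n) *
          ((volume (ball x r)).toReal / (volume (ball x ρ)).toReal) ^ ((1 : ℝ) / q) *
          ((∫ y in ball x r, ‖y‖ ^ β) / ∫ y in ball x ρ, ‖y‖ ^ β) ^ (-(1 / p)) ≤ K := by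
  rintro ⟨q, hpq, K, hK, h⟩
  set E := EuclideanSpace ℝ (Fin n)
  haveI : Nontrivial E := ⟨⟨0, EuclideanSpace.single ⟨0, hn⟩ 1, by
    intro hcontra
    have h1 : ‖(0:E)‖ = ‖EuclideanSpace.single (⟨0, hn⟩ : Fin n) (1:ℝ)‖ :=
      congrArg norm hcontra
    rw [norm_zero, EuclideanSpace.norm_single] at h1
    norm_num at h1⟩⟩
  have hq : 0 < q := hp.trans hpq
  have hβ0 : 0 < β := hp.trans hβ
  have hn0 : (0:ℝ) < n := by exact_mod_cast hn
  -- continuity / integrability of the weight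
  have hcont : Continuous fun y : E => ‖y‖ ^ β :=
    continuous_norm.rpow_const (fun y => Or.inr hβ0.le)
  have hint : ∀ r : ℝ, IntegrableOn (fun y : E => ‖y‖ ^ β) (ball 0 r) volume := by
    intro r
    exact ((hcont.continuousOn.integrableOn_compact (isCompact_closedBall 0 r)).mono_set
      ball_subset_closedBall)
  -- positivity of I(1)
  have hI1 : 0 < ∫ y in ball (0:E) 1, ‖y‖ ^ β := by
    rw [setIntegral_pos_iff_support_of_nonneg_ae]
    · have hsub : ball (0:E) 1 \ {0} ⊆
          (Function.support fun y : E => ‖y‖ ^ β) ∩ ball 0 1 := by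
        rintro y ⟨hy1, hy2⟩
        refine ⟨?_, hy1⟩
        have : y ≠ 0 := by simpa using hy2
        simp only [Function.mem_support]
        exact (Real.rpow_pos_of_pos (norm_pos_iff.2 this) β).ne'
      refine lt_of_lt_of_le ?_ (measure_mono hsub)
      rw [measure_diff_null (measure_singleton 0)]
      exact measure_ball_pos _ _ one_pos
    · filter_upwards with y
      positivity
    · exact hint 1
  -- scaling of the integral
  have hscale : ∀ t : ℝ, 0 < t → (∫ y in ball (0:E) t, ‖y‖ ^ β)
      = t ^ (n:ℝ) * (t ^ β * ∫ y in ball (0:E) 1, ‖y‖ ^ β) := by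
    intro t ht
    have h1 := Measure.setIntegral_comp_smul_of_pos (volume : Measure E)
      (fun y => ‖y‖ ^ β) (ball 0 1) ht
    rw [smul_unitBall_of_pos ht, finrank_euclideanSpace_fin] at h1
    have h2 : (∫ y in ball (0:E) 1, ‖(t • y)‖ ^ β)
        = t ^ β * ∫ y in ball (0:E) 1, ‖y‖ ^ β := by
      rw [← integral_const_mul]
      congr 1 with y
      rw [norm_smul, Real.norm_eq_abs, abs_of_pos ht, Real.mul_rpow ht.le (norm_nonneg _)]
    rw [h2, smul_eq_mul] at h1
    have htn : (0:ℝ) < t ^ n := pow_pos ht n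
    rw [Real.rpow_natCast]
    field_simp at h1 ⊢
    linarith [h1]
  -- volume of balls
  have hvol : ∀ t : ℝ, 0 < t → (volume (ball (0:E) t)).toReal
      = t ^ (n:ℝ) * (volume (ball (0:E) 1)).toReal := by
    intro t ht
    rw [Measure.addHaar_ball volume 0 ht.le, finrank_euclideanSpace_fin,
      ENNReal.toReal_mul, ENNReal.toReal_ofReal (by positivity), Real.rpow_natCast]
  have hB : (0:ℝ) < (volume (ball (0:E) 1)).toReal :=
    ENNReal.toReal_pos (measure_ball_pos _ _ one_pos).ne' measure_ball_lt_top.ne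
  -- the exponent
  set e : ℝ := 1 + n / q - (n + β) / p with he
  have he0 : e < 0 := by
    have h1 : n / q < n / p := div_lt_div_of_pos_left hn0 hp hpq
    have h2 : 1 < β / p := (one_lt_div hp).2 hβ
    have h3 : (n + β) / p = n / p + β / p := add_div (n:ℝ) β p
    rw [he, h3]; linarith
  -- the bad radius
  set t : ℝ := (K + 1) ^ (1 / e) with htdef
  have hK1 : (1:ℝ) < K + 1 := by linarith
  have ht0 : 0 < t := Real.rpow_pos_of_pos (by linarith) _
  have ht1 : t < 1 := Real.rpow_lt_one_of_one_lt_of_neg hK1 (by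
    exact div_neg_of_pos_of_neg one_pos he0)
  have hkey := h 0 t 1 ht0 ht1
  -- simplify the volume ratio
  have hvr : (volume (ball (0:E) t)).toReal / (volume (ball (0:E) 1)).toReal
      = t ^ (n:ℝ) := by
    rw [hvol t ht0, mul_div_assoc, div_self hB.ne', mul_one]
  have hir : ((∫ y in ball (0:E) t, ‖y‖ ^ β) / ∫ y in ball (0:E) 1, ‖y‖ ^ β)
      = t ^ ((n:ℝ) + β) := by
    rw [hscale t ht0, Real.rpow_add ht0]
    rw [mul_div_assoc, mul_div_assoc, div_self hI1.ne', mul_one]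
  rw [hvr, hir] at hkey
  have hne : (n:ℝ) ≠ 0 := hn0.ne'
  have hexp : (t ^ (n:ℝ)) ^ ((1:ℝ)/n) * (t ^ (n:ℝ)) ^ ((1:ℝ)/q) *
      (t ^ ((n:ℝ) + β)) ^ (-(1/p)) = t ^ e := by
    rw [← Real.rpow_mul ht0.le, ← Real.rpow_mul ht0.le, ← Real.rpow_mul ht0.le,
      ← Real.rpow_add ht0, ← Real.rpow_add ht0]
    congr 1
    rw [he]
    field_simp
    ring
  rw [hexp] at hkey
  have : t ^ e = K + 1 := by
    rw [htdef, ← Real.rpow_mul (by linarith), one_div, inv_mul_cancel₀ he0.ne,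
      Real.rpow_one]
  rw [this] at hkey
  linarith
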